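/- arXiv:1504.01590 — 6 statements merged into one kernel-verified Lean document; each statement's English description precedes it below -/
import Mathlib

section
/- For any two orthonormal bases {φ_j} and {φ_k'} of a finite-dimensional complex Hilbert space ℂ^d with d ≥ 2, there exist two non-parallel unit vectors ψ₊ and ψ₋ such that |⟨ξ, ψ₊⟩|² = |⟨ξ, ψ₋⟩|² for every vector ξ in either basis. Consequently, two orthonormal bases cannot distinguish all pure states. -/
open scoped InnerProductSpace
open Module RCLike

/-!
Let `η` be the first vector of `B₁` and look for `v ≠ 0` with `⟪η, v⟫ = 0` such that for every
`ξ` in `B₂` the coordinates `⟪ξ, v⟫` and `⟪ξ, η⟫` are orthogonal as vectors of `ℂ ≅ ℝ²`. Then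
`|⟪ξ, v + η⟫| = |⟪ξ, v - η⟫|` for `ξ` in `B₂`, and also for `ξ` in `B₁`, where one of the two
coordinates vanishes. By Parseval the `d` coordinate conditions add up to `Re ⟪η, v⟫ = 0`, so
together with `Im ⟪η, v⟫ = 0` these are `d + 1` real-linear conditions on a space of real
dimension `2 * d > d + 1`. Since `v ⊥ η`, the vectors `v ± η` have equal norms and are not
parallel, so their normalizations are the required states.
-/

section RCLike

variable {𝕜 E : Type*} [RCLike 𝕜] [NormedAddCommGroup E] [InnerProductSpace 𝕜 E]

theorem norm_add_eq_norm_sub_of_re_inner_eq_zero {x y : E} (h : re ⟪x, y⟫_𝕜 = 0) :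
    ‖x + y‖ = ‖x - y‖ := by
  have hsq : ‖x + y‖ ^ 2 = ‖x - y‖ ^ 2 := by
    rw [norm_add_sq (𝕜 := 𝕜), norm_sub_sq (𝕜 := 𝕜), h]
    ring
  exact (pow_left_inj₀ (norm_nonneg _) (norm_nonneg _) two_ne_zero).mp hsq

theorem norm_inner_add_eq_norm_inner_sub {ξ v η : E} (h : re ⟪⟪ξ, η⟫_𝕜, ⟪ξ, v⟫_𝕜⟫_𝕜 = 0) :
    ‖⟪ξ, v + η⟫_𝕜‖ = ‖⟪ξ, v - η⟫_𝕜‖ := by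
  rw [inner_add_right, inner_sub_right]
  exact norm_add_eq_norm_sub_of_re_inner_eq_zero (𝕜 := 𝕜) (by rwa [inner_re_symm])

theorem Orthonormal.re_inner_inner_eq_zero {ι : Type*} {e : ι → E} (he : Orthonormal 𝕜 e)
    {i : ι} {v : E} (hv : ⟪e i, v⟫_𝕜 = 0) (j : ι) : re ⟪⟪e j, e i⟫_𝕜, ⟪e j, v⟫_𝕜⟫_𝕜 = 0 := by
  rcases eq_or_ne j i with rfl | hji
  · simp [hv]
  · simp [he.inner_eq_zero hji]

theorem OrthonormalBasis.inner_eq_zero_of_im_eq_zero_of_re_inner_inner_eq_zero {ι : Type*}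
    [Fintype ι] (B : OrthonormalBasis ι 𝕜 E) {η v : E} (him : im ⟪η, v⟫_𝕜 = 0)
    (hre : ∀ k, re ⟪⟪B k, η⟫_𝕜, ⟪B k, v⟫_𝕜⟫_𝕜 = 0) : ⟪η, v⟫_𝕜 = 0 := by
  refine RCLike.ext ?_ (by simpa using him)
  rw [← B.sum_inner_mul_inner, map_sum, map_zero]
  refine Finset.sum_eq_zero fun k _ => ?_
  rw [← hre k, RCLike.inner_apply', inner_conj_symm]

theorem add_ne_smul_sub_of_inner_eq_zero {v η : E} (hv : v ≠ 0) (hη : η ≠ 0)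
    (h : ⟪η, v⟫_𝕜 = 0) (c : 𝕜) : v + η ≠ c • (v - η) := by
  intro hc
  have hind : LinearIndependent 𝕜 ![v, η] :=
    linearIndependent_of_ne_zero_of_inner_eq_zero (by simp [Fin.forall_fin_two, hv, hη]) (by
      intro i j hij
      fin_cases i <;> fin_cases j <;> simp_all [inner_eq_zero_symm.mp h])
  obtain ⟨h₁, h₂⟩ := LinearIndependent.pair_iff.mp hind (1 - c) (1 + c) (by
    rw [sub_smul, add_smul, one_smul, one_smul, ← sub_eq_zero.mpr hc, smul_sub]; abel)
  exact two_ne_zero (by linear_combination h₁ + h₂ : (2 : 𝕜) = 0)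

end RCLike

section Complex

variable {E ι : Type*} [NormedAddCommGroup E] [InnerProductSpace ℂ E] [Fintype ι]

theorem OrthonormalBasis.exists_ne_zero_im_inner_eq_zero_and_re_inner_inner_eq_zero
    (B : OrthonormalBasis ι ℂ E) (hE : 2 ≤ finrank ℂ E) (η : E) :
    ∃ v ≠ 0, (⟪η, v⟫_ℂ).im = 0 ∧ ∀ k, (⟪⟪B k, η⟫_ℂ, ⟪B k, v⟫_ℂ⟫_ℂ).re = 0 := by
  let f : E →ₗ[ℝ] ℝ × (ι → ℝ) :=
    { toFun := fun v => ((⟪η, v⟫_ℂ).im, fun k => (⟪⟪B k, η⟫_ℂ, ⟪B k, v⟫_ℂ⟫_ℂ).re)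
      map_add' := fun v w => by
        simp only [inner_add_right, Complex.add_im, Complex.add_re]; rfl
      map_smul' := fun r v => by
        ext
        · simp [← Complex.coe_smul]
        · simp [← Complex.coe_smul]
          ring }
  have := B.toBasis.finiteDimensional_of_finite
  have hdim : finrank ℝ (ℝ × (ι → ℝ)) < finrank ℝ E := by
    rw [finrank_real_of_complex, finrank_prod, finrank_fintype_fun_eq_card,
      finrank_self, ← finrank_eq_card_basis B.toBasis]
    omega
  obtain ⟨v, hker, hv⟩ := Submodule.exists_mem_ne_zero_of_ne_bot
    (LinearMap.ker_ne_bot_of_finrank_lt (f := f) hdim)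
  exact ⟨v, hv, congrArg Prod.fst hker, fun k => congrFun (congrArg Prod.snd hker) k⟩

end Complex

/-- Two orthonormal bases of `ℂ^d` (`d ≥ 2`) cannot distinguish all pure states:
there are two non-parallel unit vectors giving the same probabilities in both bases. -/
theorem two_bases_cannot_distinguish (d : ℕ) (hd : 2 ≤ d)
    (B₁ B₂ : OrthonormalBasis (Fin d) ℂ (EuclideanSpace ℂ (Fin d))) :
    ∃ ψp ψm : EuclideanSpace ℂ (Fin d),
      ‖ψp‖ = 1 ∧ ‖ψm‖ = 1 ∧
      (¬ ∃ c : ℂ, ψp = c • ψm) ∧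
      (∀ j : Fin d, ‖⟪B₁ j, ψp⟫_ℂ‖ ^ 2 = ‖⟪B₁ j, ψm⟫_ℂ‖ ^ 2) ∧
      (∀ j : Fin d, ‖⟪B₂ j, ψp⟫_ℂ‖ ^ 2 = ‖⟪B₂ j, ψm⟫_ℂ‖ ^ 2) := by
  set η := B₁ ⟨0, by omega⟩
  have hη : η ≠ 0 := B₁.orthonormal.ne_zero _
  obtain ⟨v, hv, him, hre⟩ :=
    B₂.exists_ne_zero_im_inner_eq_zero_and_re_inner_inner_eq_zero (by simpa using hd) η
  have hηv : ⟪η, v⟫_ℂ = 0 :=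
    B₂.inner_eq_zero_of_im_eq_zero_of_re_inner_inner_eq_zero him hre
  have hnorm : ‖v - η‖ = ‖v + η‖ := norm_sub_eq_norm_add hηv
  have hsum : v + η ≠ 0 := by
    simpa using add_ne_smul_sub_of_inner_eq_zero hv hη hηv 0
  have hdiff : v - η ≠ 0 := norm_ne_zero_iff.mp (hnorm ▸ norm_ne_zero_iff.mpr hsum)
  have hprob : ∀ (a : ℂ) ξ, (⟪⟪ξ, η⟫_ℂ, ⟪ξ, v⟫_ℂ⟫_ℂ).re = 0 →
      ‖⟪ξ, a • (v + η)⟫_ℂ‖ ^ 2 = ‖⟪ξ, a • (v - η)⟫_ℂ‖ ^ 2 := fun a ξ h => by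
    rw [inner_smul_right, inner_smul_right, norm_mul, norm_mul, norm_inner_add_eq_norm_inner_sub h]
  refine ⟨(‖v + η‖ : ℂ)⁻¹ • (v + η), (‖v + η‖ : ℂ)⁻¹ • (v - η), norm_smul_inv_norm hsum, ?_, ?_,
    fun j => hprob _ _ (B₁.orthonormal.re_inner_inner_eq_zero hηv j), fun j => hprob _ _ (hre j)⟩
  · rw [← hnorm]
    exact norm_smul_inv_norm hdiff
  · rintro ⟨c, hc⟩
    rw [smul_comm] at hc
    have ha : (‖v + η‖ : ℂ)⁻¹ ≠ 0 := inv_ne_zero (by exact_mod_cast norm_ne_zero_iff.mpr hsum)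
    exact add_ne_smul_sub_of_inner_eq_zero hv hη hηv c (smul_right_injective _ ha hc)
end

section
/- Let P₁,…,P_N be 1-dimensional orthogonal projections on ℂ^d. The projections distinguish all pure states (i.e., for any two distinct pure states ρ₁ ≠ ρ₂ there is some j with tr(P_j ρ₁) ≠ tr(P_j ρ₂)) if and only if every nonzero selfadjoint operator T satisfying tr(P_j T) = 0 for all j and tr(T) = 0 has rank at least 3. -/
/-!
The difference of two pure states is a traceless selfadjoint matrix of rank at most 2, so two
pure states that no `P j` distinguishes yield a forbidden `T`. Conversely, a nonzero traceless
selfadjoint `T` of rank at most 2 has exactly two nonzero eigenvalues, and they are `λ` and `-λ`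
(a single one cannot sum to zero); hence `T = λ (|u⟩⟨u| - |v⟩⟨v|)` for orthonormal eigenvectors
`u`, `v`, and `tr (P j T) = 0` says that no `P j` distinguishes the pure states `|u⟩⟨u|`, `|v⟩⟨v|`.
-/

open Matrix

/-- A pure state on `ℂ^d`: a rank-one orthogonal projection `|ψ⟩⟨ψ|` for a unit vector `ψ`. -/
def IsPureState {d : ℕ} (ρ : Matrix (Fin d) (Fin d) ℂ) : Prop :=
  ∃ ψ : Fin d → ℂ, star ψ ⬝ᵥ ψ = 1 ∧ ρ = Matrix.vecMulVec ψ (star ψ)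

theorem Fintype.exists_pair_support_of_sum_eq_zero {ι R : Type*} [Fintype ι] [AddCommGroup R]
    {f : ι → R} (hf : f ≠ 0) (hsum : ∑ i, f i = 0) (hcard : Nat.card {i // f i ≠ 0} < 3) :
    ∃ i j, i ≠ j ∧ f i ≠ 0 ∧ f j = -f i ∧ ∀ k, k ≠ i ∧ k ≠ j → f k = 0 := by
  classical
  set s := Finset.univ.filter (f · ≠ 0)
  have hs : s.card < 3 := by rwa [Nat.card_eq_fintype_card, Fintype.card_subtype] at hcard
  have hzero : ∀ k ∉ s, f k = 0 := by simp [s]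
  have hne : s.Nonempty := by
    obtain ⟨i, hi⟩ := Function.ne_iff.mp hf
    exact ⟨i, by simpa [s] using hi⟩
  obtain h1 | h2 : s.card = 1 ∨ s.card = 2 := by have := hne.card_pos; omega
  · obtain ⟨i, hs1⟩ := Finset.card_eq_one.mp h1
    rw [Fintype.sum_eq_single i fun k hk => hzero k (by simp [hs1, hk])] at hsum
    simpa [s, hsum] using hs1.ge (Finset.mem_singleton_self i)
  · obtain ⟨i, j, hij, hs2⟩ := Finset.card_eq_two.mp h2
    have hout : ∀ k, k ≠ i ∧ k ≠ j → f k = 0 := fun k hk => hzero k (by simp [hs2, hk])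
    have hi : f i ≠ 0 := by simpa [s] using hs2.ge (Finset.mem_insert_self i {j})
    rw [Fintype.sum_eq_add i j hij hout] at hsum
    exact ⟨i, j, hij, hi, eq_neg_of_add_eq_zero_right hsum, hout⟩

namespace Matrix

theorem rank_sub_le {K m n : Type*} [Field K] [Finite m] [Fintype n] (A B : Matrix m n K) :
    (A - B).rank ≤ A.rank + B.rank := by
  have hle : LinearMap.range (A - B).mulVecLin ≤
      LinearMap.range A.mulVecLin ⊔ LinearMap.range B.mulVecLin := by
    rintro _ ⟨x, rfl⟩
    simpa only [mulVecLin_apply, sub_mulVec] using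
      Submodule.sub_mem_sup (LinearMap.mem_range_self A.mulVecLin x)
        (LinearMap.mem_range_self B.mulVecLin x)
  exact (Submodule.finrank_mono hle).trans (Submodule.finrank_add_le_finrank_add_finrank _ _)

variable {𝕜 n : Type*} [RCLike 𝕜] [Fintype n]

theorem IsHermitian.eq_sum_eigenvalues_smul_vecMulVec [DecidableEq n] {A : Matrix n n 𝕜}
    (hA : A.IsHermitian) :
    A = ∑ i, (hA.eigenvalues i : 𝕜) •
      vecMulVec (hA.eigenvectorBasis i) (star (hA.eigenvectorBasis i)) := by
  nth_rewrite 1 [hA.spectral_theorem]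
  ext k l
  simp only [diagonal, Function.comp_apply, Unitary.conjStarAlgAut_apply, mul_apply,
    eigenvectorUnitary_apply, of_apply, mul_ite, mul_zero, Finset.sum_ite_eq', Finset.mem_univ,
    ↓reduceIte, star_apply, RCLike.star_def, sum_apply, smul_apply, vecMulVec_apply,
    Pi.star_apply]
  exact Finset.sum_congr rfl fun x _ => by ring

theorem IsHermitian.exists_eq_smul_sub_of_rank_lt_three [DecidableEq n] {A : Matrix n n 𝕜}
    (hA : A.IsHermitian) (h0 : A ≠ 0) (htr : A.trace = 0) (hrank : A.rank < 3) :
    ∃ (c : 𝕜) (i j : n), c ≠ 0 ∧ i ≠ j ∧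
      A = c • (vecMulVec (hA.eigenvectorBasis i) (star (hA.eigenvectorBasis i)) -
        vecMulVec (hA.eigenvectorBasis j) (star (hA.eigenvectorBasis j))) := by
  have hsum : ∑ i, hA.eigenvalues i = 0 := by
    exact_mod_cast hA.trace_eq_sum_eigenvalues.symm.trans htr
  obtain ⟨i, j, hij, hi, hj, hout⟩ := Fintype.exists_pair_support_of_sum_eq_zero
    (hA.eigenvalues_eq_zero_iff.not.mpr h0) hsum
    (by rwa [Nat.card_eq_fintype_card, ← hA.rank_eq_card_non_zero_eigs])
  refine ⟨hA.eigenvalues i, i, j, RCLike.ofReal_ne_zero.mpr hi, hij, ?_⟩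
  conv_lhs => rw [hA.eq_sum_eigenvalues_smul_vecMulVec,
    Fintype.sum_eq_add i j hij fun k hk => by simp [hout k hk]]
  rw [hj, RCLike.ofReal_neg, neg_smul, smul_sub, sub_eq_add_neg]

end Matrix

theorem OrthonormalBasis.injective_vecMulVec_self_star {𝕜 n ι : Type*} [RCLike 𝕜] [Fintype n]
    [Fintype ι] (b : OrthonormalBasis ι 𝕜 (EuclideanSpace 𝕜 n)) :
    Function.Injective fun i => vecMulVec (b i) (star (b i)) := by
  intro i j h
  by_contra hij
  have key := congr(($h) *ᵥ (b i))
  simp only [vecMulVec_mulVec] at key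
  rw [dotProduct_comm, dotProduct_comm _ (b i).ofLp, ← EuclideanSpace.inner_eq_star_dotProduct,
    ← EuclideanSpace.inner_eq_star_dotProduct, b.inner_eq_one,
    b.orthonormal.inner_eq_zero (Ne.symm hij)] at key
  simp only [MulOpposite.op_one, one_smul, MulOpposite.op_zero, zero_smul,
    WithLp.ofLp_eq_zero] at key
  exact b.orthonormal.ne_zero i key

namespace IsPureState

variable {d : ℕ} {ρ : Matrix (Fin d) (Fin d) ℂ}

open scoped ComplexOrder in
theorem isHermitian (h : IsPureState ρ) : ρ.IsHermitian := by
  obtain ⟨ψ, -, rfl⟩ := h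
  exact (posSemidef_vecMulVec_self_star ψ).isHermitian

theorem trace_eq_one (h : IsPureState ρ) : ρ.trace = 1 := by
  obtain ⟨ψ, hψ, rfl⟩ := h
  rw [trace_vecMulVec, dotProduct_comm, hψ]

theorem rank_le_one (h : IsPureState ρ) : ρ.rank ≤ 1 := by
  obtain ⟨ψ, -, rfl⟩ := h
  exact rank_vecMulVec_le _ _

end IsPureState

theorem OrthonormalBasis.isPureState_vecMulVec_self_star {d : ℕ} {ι : Type*} [Fintype ι]
    (b : OrthonormalBasis ι ℂ (EuclideanSpace ℂ (Fin d))) (i : ι) :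
    IsPureState (vecMulVec (b i) (star (b i))) := by
  refine ⟨b i, ?_, rfl⟩
  rw [dotProduct_comm, ← EuclideanSpace.inner_eq_star_dotProduct, b.inner_eq_one]

theorem rank_criterion_general (d N : ℕ) (P : Fin N → Matrix (Fin d) (Fin d) ℂ) :
    (∀ ρ₁ ρ₂ : Matrix (Fin d) (Fin d) ℂ, IsPureState ρ₁ → IsPureState ρ₂ → ρ₁ ≠ ρ₂ →
        ∃ j, (P j * ρ₁).trace ≠ (P j * ρ₂).trace) ↔
    (∀ T : Matrix (Fin d) (Fin d) ℂ, T.IsHermitian → T ≠ 0 → T.trace = 0 →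
        (∀ j, (P j * T).trace = 0) → 3 ≤ T.rank) := by
  constructor
  · intro hdist T hT hT0 htr hPT
    by_contra! hrank
    obtain ⟨c, i, j, hc, hij, hTeq⟩ := hT.exists_eq_smul_sub_of_rank_lt_three hT0 htr hrank
    let b := hT.eigenvectorBasis
    obtain ⟨k, hk⟩ := hdist _ _ (b.isPureState_vecMulVec_self_star i)
      (b.isPureState_vecMulVec_self_star j) (b.injective_vecMulVec_self_star.ne hij)
    have hPk := hPT k
    rw [hTeq, Matrix.mul_smul, trace_smul, mul_sub, trace_sub, smul_eq_mul, mul_eq_zero,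
      sub_eq_zero] at hPk
    exact hk (hPk.resolve_left hc)
  · intro hrank ρ₁ ρ₂ h₁ h₂ hne
    by_contra! hPρ
    have h3 := hrank (ρ₁ - ρ₂) (h₁.isHermitian.sub h₂.isHermitian) (sub_ne_zero.mpr hne)
      (by rw [trace_sub, h₁.trace_eq_one, h₂.trace_eq_one, sub_self])
      (fun j => by rw [mul_sub, trace_sub, hPρ j, sub_self])
    have h2 := (rank_sub_le ρ₁ ρ₂).trans (add_le_add h₁.rank_le_one h₂.rank_le_one)
    omega

/-- Rank criterion: one-dimensional projections `P₁,…,P_N` distinguish all pure states iff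
every nonzero traceless selfadjoint `T` orthogonal to all the `P j` has rank at least 3. -/
theorem rank_criterion (d N : ℕ) (P : Fin N → Matrix (Fin d) (Fin d) ℂ)
    (hP : ∀ j, IsPureState (P j)) :
    (∀ ρ₁ ρ₂ : Matrix (Fin d) (Fin d) ℂ, IsPureState ρ₁ → IsPureState ρ₂ → ρ₁ ≠ ρ₂ →
        ∃ j, (P j * ρ₁).trace ≠ (P j * ρ₂).trace) ↔
    (∀ T : Matrix (Fin d) (Fin d) ℂ, T.IsHermitian → T ≠ 0 → T.trace = 0 →
        (∀ j, (P j * T).trace = 0) → 3 ≤ T.rank) :=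
  rank_criterion_general d N P
end

section
/- Let T₁ and T₂ be two linearly independent selfadjoint operators on ℂ³ that are both invertible. Then there exist real numbers α₁, α₂ and λ₀ ∈ (0,1) such that the operator T = λ₀α₁T₁ + (1−λ₀)α₂T₂ is nonzero, selfadjoint, and not invertible. -/
open Matrix

private lemma real_smul_complex' (r : ℝ) (A : Matrix (Fin 3) (Fin 3) ℂ) :
    r • A = (r : ℂ) • A := by
  ext i j; simp [Matrix.smul_apply, Complex.real_smul]

private lemma det_real_smul' (r : ℝ) (A : Matrix (Fin 3) (Fin 3) ℂ) :
    (r • A).det = ((r ^ 3 : ℝ) : ℂ) * A.det := by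
  rw [real_smul_complex', Matrix.det_smul]
  push_cast
  simp [Fintype.card_fin]

private lemma herm_det_real' {A : Matrix (Fin 3) (Fin 3) ℂ} (hA : A.IsHermitian) :
    A.det = (A.det.re : ℂ) := by
  have h : Aᴴ.det = A.det := by rw [hA.eq]
  rw [Matrix.det_conjTranspose] at h
  have h' : (starRingEnd ℂ) A.det = A.det := h
  exact (Complex.conj_eq_iff_re.mp h').symm

/-- Given two linearly independent invertible Hermitian operators on `ℂ³`, some proper convex
combination of suitable real rescalings of them is nonzero, Hermitian and not invertible. -/
theorem convex_combination_singular (T₁ T₂ : Matrix (Fin 3) (Fin 3) ℂ)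
    (h₁ : T₁.IsHermitian) (h₂ : T₂.IsHermitian)
    (hind : LinearIndependent ℝ ![T₁, T₂])
    (hinv₁ : IsUnit T₁) (hinv₂ : IsUnit T₂) :
    ∃ (α₁ α₂ : ℝ) (l₀ : ℝ), l₀ ∈ Set.Ioo (0 : ℝ) 1 ∧
      ((l₀ * α₁ : ℝ) • T₁ + ((1 - l₀) * α₂ : ℝ) • T₂ ≠ 0) ∧
      ((l₀ * α₁ : ℝ) • T₁ + ((1 - l₀) * α₂ : ℝ) • T₂).IsHermitian ∧
      ¬ IsUnit ((l₀ * α₁ : ℝ) • T₁ + ((1 - l₀) * α₂ : ℝ) • T₂) := by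
  have hdet₁ : T₁.det ≠ 0 := by
    intro h
    exact absurd ((Matrix.isUnit_iff_isUnit_det T₁).mp hinv₁) (by simp [h])
  have hdet₂ : T₂.det ≠ 0 := by
    intro h
    exact absurd ((Matrix.isUnit_iff_isUnit_det T₂).mp hinv₂) (by simp [h])
  set d₁ := T₁.det.re with hd₁def
  set d₂ := T₂.det.re with hd₂def
  have hre₁ : ((d₁ : ℝ) : ℂ) = T₁.det := (herm_det_real' h₁).symm
  have hre₂ : ((d₂ : ℝ) : ℂ) = T₂.det := (herm_det_real' h₂).symm
  have hd₁ : d₁ ≠ 0 := by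
    intro h; apply hdet₁; rw [← hre₁, h]; simp
  have hd₂ : d₂ ≠ 0 := by
    intro h; apply hdet₂; rw [← hre₂, h]; simp
  set α₁ : ℝ := if 0 < d₁ then 1 else -1 with hα₁def
  set α₂ : ℝ := if 0 < d₂ then -1 else 1 with hα₂def
  have hα₁ne : α₁ ≠ 0 := by
    rw [hα₁def]; split <;> norm_num
  have hp : 0 < α₁ ^ 3 * d₁ := by
    rw [hα₁def]; split
    · simpa
    · have : d₁ < 0 := lt_of_le_of_ne (not_lt.mp ‹¬ 0 < d₁›) hd₁
      nlinarith
  have hn : α₂ ^ 3 * d₂ < 0 := by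
    rw [hα₂def]; split
    · nlinarith
    · have : d₂ < 0 := lt_of_le_of_ne (not_lt.mp ‹¬ 0 < d₂›) hd₂
      nlinarith
  set F : ℝ → Matrix (Fin 3) (Fin 3) ℂ :=
    fun l => (l * α₁ : ℝ) • T₁ + ((1 - l) * α₂ : ℝ) • T₂ with hFdef
  have hFherm : ∀ l, (F l).IsHermitian := by
    intro l
    show _ = _
    rw [Matrix.conjTranspose_add, Matrix.conjTranspose_smul, Matrix.conjTranspose_smul,
      h₁.eq, h₂.eq, star_trivial, star_trivial]
  have hcont : Continuous fun l => (F l).det.re := by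
    apply Complex.continuous_re.comp
    apply Continuous.matrix_det
    apply Continuous.add
    · exact (continuous_id.mul continuous_const).smul continuous_const
    · exact ((continuous_const.sub continuous_id).mul continuous_const).smul continuous_const
  have hg0 : (F 0).det.re = α₂ ^ 3 * d₂ := by
    have : F 0 = (α₂ : ℝ) • T₂ := by simp [hFdef]
    rw [this, det_real_smul', ← hre₂, ← Complex.ofReal_mul, Complex.ofReal_re]
  have hg1 : (F 1).det.re = α₁ ^ 3 * d₁ := by
    have : F 1 = (α₁ : ℝ) • T₁ := by simp [hFdef]
    rw [this, det_real_smul', ← hre₁, ← Complex.ofReal_mul, Complex.ofReal_re]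
  have hmem : (0 : ℝ) ∈ Set.Ioo ((F 0).det.re) ((F 1).det.re) := by
    rw [hg0, hg1]; exact ⟨hn, hp⟩
  obtain ⟨l₀, hl₀, hval⟩ :=
    intermediate_value_Ioo (by norm_num : (0:ℝ) ≤ 1) hcont.continuousOn hmem
  have hval' : (F l₀).det.re = 0 := hval
  have hdetzero : (F l₀).det = 0 := by
    rw [herm_det_real' (hFherm l₀), hval']
    simp
  refine ⟨α₁, α₂, l₀, hl₀, ?_, hFherm l₀, ?_⟩
  · intro h
    rw [linearIndependent_fin2] at hind
    simp only [Matrix.cons_val_one, Matrix.head_cons, Matrix.cons_val_zero] at hind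
    have hc₁ : l₀ * α₁ ≠ 0 := mul_ne_zero (ne_of_gt hl₀.1) hα₁ne
    rw [add_eq_zero_iff_eq_neg] at h
    apply hind.2 ((l₀ * α₁)⁻¹ * (-((1 - l₀) * α₂)))
    rw [mul_smul, neg_smul, ← h, smul_smul, inv_mul_cancel₀ hc₁, one_smul]
  · rw [Matrix.isUnit_iff_isUnit_det, hdetzero]
    simp
end

section
/- In dimension d = 3, three orthonormal bases cannot distinguish all pure states: for any three orthonormal bases B₁, B₂, B₃ of ℂ³, there exist two distinct pure states ρ₁ ≠ ρ₂ such that ⟨φ, ρ₁ φ⟩ = ⟨φ, ρ₂ φ⟩ for every vector φ in B₁ ∪ B₂ ∪ B₃. -/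
open scoped InnerProductSpace

/-!
The real vector space of self-adjoint operators on `ℂ³` has dimension 9. Requiring the trace and
the expectation values `⟪φ, T φ⟫` at two vectors of each basis to vanish imposes 7 linear
conditions, leaving a plane of solutions; on the unit circle of that plane the odd function
`re ∘ det` has a zero, giving a nonzero traceless singular self-adjoint `T`. Its eigenvalues
are then `a, 0, -a` with `a ≠ 0`, so for the eigenvectors `ψ₁, ψ₂` of `±a` the form `⟪φ, T φ⟫`
equals `a (‖⟪φ, ψ₁⟫‖² - ‖⟪φ, ψ₂⟫‖²)`. Since the trace is also the sum of the expectation values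
over any orthonormal basis, `⟪φ, T φ⟫` vanishes at every vector of the three bases.
-/

open Module RCLike LinearMap

theorem two_mul_finrank_selfAdjoint (A : Type*) [AddCommGroup A] [Module ℂ A] [StarAddMonoid A]
    [StarModule ℂ A] [FiniteDimensional ℝ A] :
    2 * finrank ℝ (selfAdjoint.submodule ℝ A) = finrank ℝ A := by
  have := (imaginaryPart (A := A)).finrank_range_add_finrank_ker
  rw [range_eq_top.mpr imaginaryPart_surjective, finrank_top, ker_imaginaryPart] at this
  rw [← this, two_mul]
  rfl

section OddFunction

variable {V : Type*} [AddCommGroup V] [Module ℝ V] [TopologicalSpace V] [ContinuousAdd V]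
  [ContinuousSMul ℝ V] {f : V → ℝ}

theorem exists_cos_smul_add_sin_smul_eq_zero_of_odd (hf : Continuous f)
    (hodd : ∀ x, f (-x) = -f x) (u w : V) :
    ∃ θ : ℝ, f (Real.cos θ • u + Real.sin θ • w) = 0 := by
  set g : ℝ → ℝ := fun θ ↦ f (Real.cos θ • u + Real.sin θ • w)
  have hg : Continuous g := by fun_prop
  have hπ : g Real.pi = -g 0 := by simp [g, ← hodd]
  have h0 : (0 : ℝ) ∈ Set.uIcc (g 0) (g Real.pi) := by
    rw [hπ, Set.mem_uIcc]
    rcases le_total 0 (g 0) with h | h <;> [right; left] <;> constructor <;> linarith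
  obtain ⟨θ, -, hθ⟩ := intermediate_value_uIcc hg.continuousOn h0
  exact ⟨θ, hθ⟩

theorem Submodule.exists_ne_zero_map_eq_zero_of_odd (K : Submodule ℝ V) (hK : 1 < finrank ℝ K)
    (hf : Continuous f) (hodd : ∀ x, f (-x) = -f x) : ∃ x ∈ K, x ≠ 0 ∧ f x = 0 := by
  have := Module.finite_of_finrank_pos (zero_lt_one.trans hK)
  obtain ⟨u, hu⟩ := finrank_pos_iff_exists_ne_zero.mp (zero_lt_one.trans hK)
  obtain ⟨w, huw⟩ := exists_linearIndependent_pair_of_one_lt_finrank hK hu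
  obtain ⟨θ, hθ⟩ := exists_cos_smul_add_sin_smul_eq_zero_of_odd hf hodd u w
  refine ⟨_, K.add_mem (K.smul_mem _ u.2) (K.smul_mem _ w.2), fun h ↦ ?_, hθ⟩
  obtain ⟨hc, hs⟩ := LinearIndependent.pair_iff.mp huw _ _ (Subtype.ext h)
  simpa [hc, hs] using Real.cos_sq_add_sin_sq θ

end OddFunction

theorem eq_vecCons_of_antitone_of_sum_eq_zero_of_prod_eq_zero {μ : Fin 3 → ℝ} (hμ : Antitone μ)
    (hsum : ∑ i, μ i = 0) (hprod : ∏ i, μ i = 0) (hne : μ ≠ 0) :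
    ∃ a, 0 < a ∧ μ = ![a, 0, -a] := by
  rw [Fin.sum_univ_three] at hsum
  rw [Fin.prod_univ_three] at hprod
  have h₀₁ : μ 1 ≤ μ 0 := hμ (by decide)
  have h₁₂ : μ 2 ≤ μ 1 := hμ (by decide)
  have hpos : 0 < μ 0 := by
    by_contra! h
    exact hne (funext fun i ↦ by fin_cases i <;> simp <;> linarith)
  have hneg : μ 2 < 0 := by
    by_contra! h
    exact hne (funext fun i ↦ by fin_cases i <;> simp <;> linarith)
  have h₁ : μ 1 = 0 := by simpa [hpos.ne', hneg.ne] using hprod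
  refine ⟨μ 0, hpos, funext fun i ↦ ?_⟩
  fin_cases i <;> simp [h₁]
  linarith

section Symmetric

variable {𝕜 E : Type*} [RCLike 𝕜] [NormedAddCommGroup E] [InnerProductSpace 𝕜 E]
  {T : E →ₗ[𝕜] E}

theorem OrthonormalBasis.re_inner_apply_self_eq_zero_of_forall_castSucc {n : ℕ}
    (b : OrthonormalBasis (Fin (n + 1)) 𝕜 E) (htr : re (trace 𝕜 E T) = 0)
    (h : ∀ j : Fin n, re ⟪b j.castSucc, T (b j.castSucc)⟫_𝕜 = 0) (j : Fin (n + 1)) :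
    re ⟪b j, T (b j)⟫_𝕜 = 0 := by
  have hlast : re ⟪b (Fin.last n), T (b (Fin.last n))⟫_𝕜 = 0 := by
    rw [trace_eq_sum_inner T b, map_sum, Fin.sum_univ_castSucc] at htr
    simpa [h] using htr
  exact Fin.lastCases hlast h j

variable [FiniteDimensional 𝕜 E] {n : ℕ}

theorem LinearMap.IsSymmetric.re_inner_apply_self_eq_sum (hT : T.IsSymmetric)
    (hn : finrank 𝕜 E = n) (φ : E) :
    re ⟪φ, T φ⟫_𝕜 = ∑ i, hT.eigenvalues hn i * ‖⟪hT.eigenvectorBasis hn i, φ⟫_𝕜‖ ^ 2 := by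
  set b := hT.eigenvectorBasis hn
  have hb : ∀ i, ⟪b i, T φ⟫_𝕜 = hT.eigenvalues hn i * ⟪b i, φ⟫_𝕜 := fun i ↦ by
    rw [← hT, hT.apply_eigenvectorBasis, inner_smul_left, conj_ofReal]
  rw [← b.sum_inner_mul_inner, map_sum]
  refine Finset.sum_congr rfl fun i _ ↦ ?_
  rw [hb, ← inner_conj_symm, mul_left_comm, RCLike.conj_mul, ← ofReal_pow, ← ofReal_mul,
    ofReal_re]

theorem LinearMap.IsSymmetric.eq_zero_of_eigenvalues_eq_zero (hT : T.IsSymmetric)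
    (hn : finrank 𝕜 E = n) (h : hT.eigenvalues hn = 0) : T = 0 :=
  (hT.eigenvectorBasis hn).toBasis.ext fun i ↦ by simp [h]

theorem LinearMap.IsSymmetric.exists_orthogonal_pair_norm_inner_sq_eq_of_isotropic
    (hT : T.IsSymmetric) (hn : finrank 𝕜 E = 3) (hT0 : T ≠ 0) (htr : re (trace 𝕜 E T) = 0)
    (hdet : re T.det = 0) :
    ∃ ψ₁ ψ₂ : E, ‖ψ₁‖ = 1 ∧ ‖ψ₂‖ = 1 ∧ ⟪ψ₂, ψ₁⟫_𝕜 = 0 ∧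
      ∀ φ, re ⟪φ, T φ⟫_𝕜 = 0 → ‖⟪φ, ψ₁⟫_𝕜‖ ^ 2 = ‖⟪φ, ψ₂⟫_𝕜‖ ^ 2 := by
  have hsum : ∑ i, hT.eigenvalues hn i = 0 := (hT.re_trace_eq_sum_eigenvalues hn).symm.trans htr
  have hprod : ∏ i, hT.eigenvalues hn i = 0 := by
    rwa [hT.det_eq_prod_eigenvalues hn, ← ofReal_prod, ofReal_re] at hdet
  obtain ⟨a, ha, hμ⟩ := eq_vecCons_of_antitone_of_sum_eq_zero_of_prod_eq_zero
    (hT.eigenvalues_antitone hn) hsum hprod (mt (hT.eq_zero_of_eigenvalues_eq_zero hn) hT0)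
  set b := hT.eigenvectorBasis hn
  refine ⟨b 0, b 2, b.orthonormal.1 0, b.orthonormal.1 2, b.orthonormal.2 (by decide),
    fun φ hφ ↦ ?_⟩
  rw [hT.re_inner_apply_self_eq_sum hn, Fin.sum_univ_three, hμ] at hφ
  simp only [Matrix.cons_val, zero_mul, add_zero, neg_mul, ← sub_eq_add_neg, ← mul_sub] at hφ
  rw [norm_inner_symm, norm_inner_symm φ]
  exact sub_eq_zero.mp ((mul_eq_zero.mp hφ).resolve_left ha.ne')

end Symmetric

section SelfAdjoint

variable {E : Type*} [NormedAddCommGroup E] [InnerProductSpace ℂ E] [FiniteDimensional ℂ E]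

noncomputable def expectationsAndTrace {ι : Type*} (v : ι → E) :
    (E →L[ℂ] E) →ₗ[ℝ] (ι → ℝ) × ℝ where
  toFun T := (fun k ↦ re ⟪v k, T (v k)⟫_ℂ, re (trace ℂ E T))
  map_add' S T := by ext <;> simp
  map_smul' r T := by ext <;> simp

theorem exists_isSymmetric_ne_zero_isotropic {ι : Type*} [Fintype ι] (hE : finrank ℂ E = 3)
    (v : ι → E) (hι : Fintype.card ι ≤ 6) :
    ∃ T : E →ₗ[ℂ] E, T.IsSymmetric ∧ T ≠ 0 ∧ re (trace ℂ E T) = 0 ∧ re T.det = 0 ∧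
      ∀ k, re ⟪v k, T (v k)⟫_ℂ = 0 := by
  let S := selfAdjoint.submodule ℝ (E →L[ℂ] E)
  have hS : finrank ℝ S = 9 := by
    have := two_mul_finrank_selfAdjoint (E →L[ℂ] E)
    rw [finrank_real_of_complex, ← LinearMap.toContinuousLinearMap.finrank_eq, finrank_linearMap,
      hE] at this
    show finrank ℝ (selfAdjoint.submodule ℝ (E →L[ℂ] E)) = 9
    omega
  let Φ := expectationsAndTrace v ∘ₗ S.subtype
  have hK : 1 < finrank ℝ (ker Φ) := by
    have hnullity := Φ.finrank_range_add_finrank_ker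
    have hrange := (range Φ).finrank_le
    simp only [finrank_prod, finrank_fintype_fun_eq_card, finrank_self] at hrange
    omega
  have hodd (T : E →L[ℂ] E) : re (-T).det = -re T.det := by
    rw [← neg_one_smul ℂ T, ContinuousLinearMap.det, ContinuousLinearMap.toLinearMap_smul,
      LinearMap.det_smul, hE]
    norm_num
  obtain ⟨T, hTK, hT0, hdet⟩ := (ker Φ).exists_ne_zero_map_eq_zero_of_odd hK
    (f := fun T : S ↦ re (T : E →L[ℂ] E).det)
    (continuous_re.comp (ContinuousLinearMap.continuous_det.comp continuous_subtype_val))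
    (fun T ↦ hodd T)
  have hΦ : Φ T = 0 := hTK
  simp only [Φ, expectationsAndTrace, comp_apply, Submodule.subtype_apply, coe_mk, AddHom.coe_mk,
    Prod.ext_iff, funext_iff] at hΦ
  exact ⟨T, ContinuousLinearMap.isSelfAdjoint_iff_isSymmetric.mp T.2,
    fun h ↦ hT0 (Subtype.ext (ContinuousLinearMap.coe_injective h)), hΦ.2, hdet, hΦ.1⟩

end SelfAdjoint

/-- In dimension 3, three orthonormal bases cannot distinguish all pure states: there are two
distinct pure states giving the same outcome probabilities for every vector of the three bases. -/
theorem three_bases_insufficient_dim3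
    (B₁ B₂ B₃ : OrthonormalBasis (Fin 3) ℂ (EuclideanSpace ℂ (Fin 3))) :
    ∃ ψ₁ ψ₂ : EuclideanSpace ℂ (Fin 3),
      ‖ψ₁‖ = 1 ∧ ‖ψ₂‖ = 1 ∧
      (¬ ∃ c : ℂ, ψ₁ = c • ψ₂) ∧
      (∀ j : Fin 3, ‖⟪B₁ j, ψ₁⟫_ℂ‖ ^ 2 = ‖⟪B₁ j, ψ₂⟫_ℂ‖ ^ 2) ∧
      (∀ j : Fin 3, ‖⟪B₂ j, ψ₁⟫_ℂ‖ ^ 2 = ‖⟪B₂ j, ψ₂⟫_ℂ‖ ^ 2) ∧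
      (∀ j : Fin 3, ‖⟪B₃ j, ψ₁⟫_ℂ‖ ^ 2 = ‖⟪B₃ j, ψ₂⟫_ℂ‖ ^ 2) := by
  have hE : finrank ℂ (EuclideanSpace ℂ (Fin 3)) = 3 := finrank_euclideanSpace_fin
  let B := ![B₁, B₂, B₃]
  obtain ⟨T, hT, hT0, htr, hdet, hv⟩ :=
    exists_isSymmetric_ne_zero_isotropic hE (fun p : Fin 3 × Fin 2 ↦ B p.1 p.2.castSucc) (by simp)
  obtain ⟨ψ₁, ψ₂, h₁, h₂, h₁₂, hψ⟩ :=
    hT.exists_orthogonal_pair_norm_inner_sq_eq_of_isotropic hE hT0 htr hdet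
  have hB (i : Fin 3) (j : Fin 3) : ‖⟪B i j, ψ₁⟫_ℂ‖ ^ 2 = ‖⟪B i j, ψ₂⟫_ℂ‖ ^ 2 :=
    hψ _ ((B i).re_inner_apply_self_eq_zero_of_forall_castSucc htr (fun j ↦ hv (i, j)) j)
  refine ⟨ψ₁, ψ₂, h₁, h₂, ?_, hB 0, hB 1, hB 2⟩
  rintro ⟨c, rfl⟩
  rw [inner_smul_right, inner_self_eq_norm_sq_to_K, h₂] at h₁₂
  have hc : c = 0 := by simpa using h₁₂
  simp [hc] at h₁
end

section
/- If m orthonormal bases of ℂ^d distinguish all pure states, then there exist m(d−1) selfadjoint operators on ℂ^d that distinguish all pure states. Consequently, with 𝔰_d the minimal number of selfadjoint operators and 𝔟_d the minimal number of orthonormal bases that distinguish all pure states, (d−1)·𝔟_d ≥ 𝔰_d. -/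
open Matrix

/-- A finite family of operators distinguishes all pure states. -/
def Distinguishes {d n : ℕ} (A : Fin n → Matrix (Fin d) (Fin d) ℂ) : Prop :=
  ∀ ρ₁ ρ₂ : Matrix (Fin d) (Fin d) ℂ, IsPureState ρ₁ → IsPureState ρ₂ → ρ₁ ≠ ρ₂ →
    ∃ i, (A i * ρ₁).trace ≠ (A i * ρ₂).trace

/-- An orthonormal basis of `ℂ^d` given as a family of vectors. -/
def IsONB {d : ℕ} (φ : Fin d → Fin d → ℂ) : Prop :=
  ∀ i j, star (φ i) ⬝ᵥ φ j = if i = j then (1 : ℂ) else 0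

/-- A family of orthonormal bases distinguishes all pure states (via the associated
rank-one projections). -/
def BasesDistinguish {d m : ℕ} (B : Fin m → Fin d → Fin d → ℂ) : Prop :=
  (∀ l, IsONB (B l)) ∧
    ∀ ρ₁ ρ₂ : Matrix (Fin d) (Fin d) ℂ, IsPureState ρ₁ → IsPureState ρ₂ → ρ₁ ≠ ρ₂ →
      ∃ l j, (Matrix.vecMulVec (B l j) (star (B l j)) * ρ₁).trace ≠
        (Matrix.vecMulVec (B l j) (star (B l j)) * ρ₂).trace

/-- Minimal number of selfadjoint operators distinguishing all pure states in dimension `d`. -/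
noncomputable def sNum (d : ℕ) : ℕ :=
  sInf {n | ∃ A : Fin n → Matrix (Fin d) (Fin d) ℂ, (∀ i, (A i).IsHermitian) ∧ Distinguishes A}

/-- Minimal number of orthonormal bases distinguishing all pure states in dimension `d`. -/
noncomputable def bNum (d : ℕ) : ℕ :=
  sInf {m | ∃ B : Fin m → Fin d → Fin d → ℂ, BasesDistinguish B}

lemma proj_herm {d : ℕ} (φ : Fin d → ℂ) : (Matrix.vecMulVec φ (star φ)).IsHermitian := by
  ext i j
  simp [Matrix.vecMulVec, Matrix.conjTranspose_apply, mul_comm]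

lemma sum_proj {d : ℕ} (φ : Fin d → Fin d → ℂ) (h : IsONB φ) :
    ∑ j, Matrix.vecMulVec (φ j) (star (φ j)) = (1 : Matrix (Fin d) (Fin d) ℂ) := by
  have h1 : (Matrix.of φ) * (Matrix.of φ)ᴴ = 1 := by
    ext i j
    have hh := h i j
    simp only [IsONB, dotProduct, Pi.star_apply] at hh
    have h2 := congrArg star hh
    simp only [star_sum, star_mul', star_star, apply_ite, star_one, star_zero] at h2
    simp only [Matrix.mul_apply, Matrix.conjTranspose_apply, Matrix.of_apply, Matrix.one_apply]
    split_ifs at h2 ⊢ <;> assumption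
  have h2 : (Matrix.of φ)ᴴ * (Matrix.of φ) = 1 := mul_eq_one_comm.mp h1
  ext i k
  have hh := congrArg (fun M => M i k) h2
  simp only [Matrix.mul_apply, Matrix.conjTranspose_apply, Matrix.of_apply, Matrix.one_apply] at hh
  have h3 := congrArg star hh
  simp only [star_sum, star_mul', star_star, apply_ite, star_one, star_zero] at h3
  simp only [Matrix.sum_apply, Matrix.vecMulVec_apply, Pi.star_apply, Matrix.one_apply]
  split_ifs at h3 ⊢ <;> assumption

lemma trace_pure {d : ℕ} (ρ : Matrix (Fin d) (Fin d) ℂ) (h : IsPureState ρ) : ρ.trace = 1 := by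
  obtain ⟨ψ, h1, rfl⟩ := h
  rw [← h1]
  simp [Matrix.trace, Matrix.vecMulVec, dotProduct, mul_comm]

lemma construction {d m : ℕ} (B : Fin m → Fin d → Fin d → ℂ) (hB : BasesDistinguish B) :
    ∃ A : Fin (m * (d - 1)) → Matrix (Fin d) (Fin d) ℂ,
      (∀ i, (A i).IsHermitian) ∧ Distinguishes A := by
  set P : Fin m → Fin d → Matrix (Fin d) (Fin d) ℂ :=
    fun l j => Matrix.vecMulVec (B l j) (star (B l j)) with hP
  refine ⟨fun i => P (finProdFinEquiv.symm i).1
      (Fin.castLE (Nat.sub_le d 1) (finProdFinEquiv.symm i).2), fun i => proj_herm _, ?_⟩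
  intro ρ₁ ρ₂ h1 h2 hne
  obtain ⟨l, j, hj⟩ := hB.2 ρ₁ ρ₂ h1 h2 hne
  have key : ∃ j' : Fin (d - 1),
      (P l (Fin.castLE (Nat.sub_le d 1) j') * ρ₁).trace ≠
        (P l (Fin.castLE (Nat.sub_le d 1) j') * ρ₂).trace := by
    by_contra hC
    push_neg at hC
    have hCall : ∀ j0 : Fin d, j0.val < d - 1 →
        (P l j0 * ρ₁).trace = (P l j0 * ρ₂).trace := by
      intro j0 hj0
      have := hC ⟨j0.val, hj0⟩
      simpa using this
    by_cases hcase : j.val < d - 1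
    · exact hj (hCall j hcase)
    · have hjval : j.val = d - 1 := by omega
      have hsum : ∀ ρ : Matrix (Fin d) (Fin d) ℂ, IsPureState ρ →
          ∑ j0, (P l j0 * ρ).trace = 1 := by
        intro ρ hρ
        rw [← Matrix.trace_sum, ← Finset.sum_mul, sum_proj (B l) (hB.1 l), one_mul,
          trace_pure ρ hρ]
      have herase : ∑ j0 ∈ Finset.univ.erase j, (P l j0 * ρ₁).trace =
          ∑ j0 ∈ Finset.univ.erase j, (P l j0 * ρ₂).trace := by
        refine Finset.sum_congr rfl fun x hx => ?_
        have hxj : x ≠ j := (Finset.mem_erase.mp hx).1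
        have : x.val < d - 1 := by
          have := x.isLt
          have : x.val ≠ d - 1 := fun hxv => hxj (Fin.ext (hxv.trans hjval.symm))
          omega
        exact hCall x this
      have e1 := Finset.add_sum_erase Finset.univ (fun j0 => (P l j0 * ρ₁).trace)
        (Finset.mem_univ j)
      have e2 := Finset.add_sum_erase Finset.univ (fun j0 => (P l j0 * ρ₂).trace)
        (Finset.mem_univ j)
      rw [hsum ρ₁ h1] at e1
      rw [hsum ρ₂ h2] at e2
      apply hj
      have : (P l j * ρ₁).trace = 1 - ∑ j0 ∈ Finset.univ.erase j, (P l j0 * ρ₁).trace := by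
        linear_combination e1
      rw [this, herase]
      linear_combination e2.symm
  obtain ⟨j', hj'⟩ := key
  exact ⟨finProdFinEquiv (l, j'), by simpa using hj'⟩

/-- If `m` orthonormal bases distinguish all pure states then so do `m(d−1)` selfadjoint
operators; consequently `(d−1)·𝔟_d ≥ 𝔰_d`. -/
theorem bases_to_operators (d m : ℕ)
    (B : Fin m → Fin d → Fin d → ℂ) (hB : BasesDistinguish B) :
    (∃ A : Fin (m * (d - 1)) → Matrix (Fin d) (Fin d) ℂ,
        (∀ i, (A i).IsHermitian) ∧ Distinguishes A) ∧
    sNum d ≤ (d - 1) * bNum d := by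
  refine ⟨construction B hB, ?_⟩
  have hne : {m' | ∃ B' : Fin m' → Fin d → Fin d → ℂ, BasesDistinguish B'}.Nonempty :=
    ⟨m, B, hB⟩
  obtain ⟨B₀, hB₀⟩ : ∃ B₀ : Fin (bNum d) → Fin d → Fin d → ℂ, BasesDistinguish B₀ :=
    Nat.sInf_mem hne
  obtain ⟨A₀, hA₀⟩ := construction B₀ hB₀
  have hle : sNum d ≤ bNum d * (d - 1) := Nat.sInf_le ⟨A₀, hA₀.1, hA₀.2⟩
  calc sNum d ≤ bNum d * (d - 1) := hle
    _ = (d - 1) * bNum d := mul_comm _ _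
end

section
/- For the three orthogonal spin directions e₁, e₂, e₃ and any fourth direction n₄ ∈ ℝ³, the corresponding four eigenbases of the spin-1 operators n_k·L cannot distinguish all pure states on ℂ³: the associated 4×5 matrix M with rows M_k = (2√2 n_{kx}n_{kz}, −2√2 n_{ky}n_{kz}, n_{kx}² − n_{ky}², −2n_{kx}n_{ky}, 3n_{kz}² − 1) has rank at most 3. -/
/-!
Write `ψ± = (u/2, ±1/√2, -ū/2)` with `|u| = 1` and `D = |ψ+⟩⟨ψ+| - |ψ-⟩⟨ψ-|`. For a unit
direction `n` the spin operator `S = n·L` satisfies `tr S = tr S³ = 0` and `tr S² = 2`, which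
forces its three eigenvalues to be pairwise distinct. For an orthonormal eigenbasis `b` of `S`, the
numbers `⟨b i|D|b i⟩` therefore solve a nonsingular Vandermonde system whose right-hand side is
`tr D, tr(D S), tr(D S²)`, so `ψ+` and `ψ-` have the same outcome probabilities in that basis as
soon as these three traces vanish. The first two vanish for every `n`; the last one is a multiple
of `n_z · Re(u (n_x + i n_y))`, which vanishes for `e₁, e₂, e₃` whatever `u` is, and for `n₄`
after choosing the phase `u`.
-/

open Matrix

noncomputable def Lx : Matrix (Fin 3) (Fin 3) ℂ :=
  ((Real.sqrt 2)⁻¹ : ℝ) • !![0, 1, 0; 1, 0, 1; 0, 1, 0]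
noncomputable def Ly : Matrix (Fin 3) (Fin 3) ℂ :=
  ((Real.sqrt 2)⁻¹ : ℝ) • !![0, -Complex.I, 0; Complex.I, 0, -Complex.I; 0, Complex.I, 0]
noncomputable def Lz : Matrix (Fin 3) (Fin 3) ℂ := !![1, 0, 0; 0, 0, 0; 0, 0, -1]

/-- The spin operator along direction `v`. -/
noncomputable def spinOp (v : Fin 3 → ℝ) : Matrix (Fin 3) (Fin 3) ℂ :=
  (v 0 : ℝ) • Lx + (v 1 : ℝ) • Ly + (v 2 : ℝ) • Lz

/-- The row of the matrix `M` associated to a direction `v`. -/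
noncomputable def Mrow (v : Fin 3 → ℝ) : Fin 5 → ℝ :=
  ![2 * Real.sqrt 2 * v 0 * v 2, -(2 * Real.sqrt 2) * v 1 * v 2,
    v 0 ^ 2 - v 1 ^ 2, -2 * (v 0 * v 1), 3 * v 2 ^ 2 - 1]

open Complex

theorem Matrix.rank_lt_card_of_not_linearIndependent_row {R m n : Type*} [Field R] [Fintype m]
    [Fintype n] {A : Matrix m n R} (h : ¬ LinearIndependent R A.row) : A.rank < Fintype.card m := by
  rw [rank_eq_finrank_span_row]
  exact (finrank_range_le_card _).lt_of_ne fun hcard =>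
    h (linearIndependent_iff_card_eq_finrank_span.mpr hcard.symm)

theorem pow_mulVec_of_mulVec_eq_smul {R ι : Type*} [CommSemiring R] [Fintype ι] [DecidableEq ι]
    {S : Matrix ι ι R} {v : ι → R} {μ : R} (h : S *ᵥ v = μ • v) (m : ℕ) :
    (S ^ m) *ᵥ v = μ ^ m • v := by
  induction m with
  | zero => simp
  | succ m ih => rw [pow_succ, ← mulVec_mulVec, h, mulVec_smul, ih, smul_smul, ← pow_succ']

section Orthonormal

variable {R ι : Type*} [CommRing R] [StarRing R] [Fintype ι] [DecidableEq ι]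

theorem trace_eq_sum_star_dotProduct_mulVec (b : ι → ι → R)
    (hb : ∀ i j, star (b i) ⬝ᵥ b j = if i = j then 1 else 0) (X : Matrix ι ι R) :
    X.trace = ∑ i, star (b i) ⬝ᵥ (X *ᵥ b i) := by
  set U : Matrix ι ι R := (of b)ᵀ
  have hUU : Uᴴ * U = 1 := by
    ext i j
    simpa [U, mul_apply, dotProduct, one_apply] using hb i j
  calc X.trace = (X * U * Uᴴ).trace := by rw [Matrix.mul_assoc, mul_eq_one_comm.mp hUU, mul_one]
    _ = (Uᴴ * (X * U)).trace := trace_mul_comm _ _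
    _ = ∑ i, star (b i) ⬝ᵥ (X *ᵥ b i) := by
      simp [U, trace, mul_apply, dotProduct, mulVec]

theorem trace_mul_pow_eq_sum (b : ι → ι → R)
    (hb : ∀ i j, star (b i) ⬝ᵥ b j = if i = j then 1 else 0) {S : Matrix ι ι R} {μ : ι → R}
    (hμ : ∀ i, S *ᵥ b i = μ i • b i) (D : Matrix ι ι R) (m : ℕ) :
    (D * S ^ m).trace = ∑ i, μ i ^ m * (star (b i) ⬝ᵥ (D *ᵥ b i)) := by
  rw [trace_eq_sum_star_dotProduct_mulVec b hb]
  refine Finset.sum_congr rfl fun i _ => ?_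
  rw [← mulVec_mulVec, pow_mulVec_of_mulVec_eq_smul (hμ i), mulVec_smul, dotProduct_smul,
    smul_eq_mul]

theorem sum_pow_eq_trace_pow (b : ι → ι → R)
    (hb : ∀ i j, star (b i) ⬝ᵥ b j = if i = j then 1 else 0) {S : Matrix ι ι R} {μ : ι → R}
    (hμ : ∀ i, S *ᵥ b i = μ i • b i) (m : ℕ) : ∑ i, μ i ^ m = (S ^ m).trace := by
  simpa [hb] using (trace_mul_pow_eq_sum b hb hμ 1 m).symm

end Orthonormal

theorem star_dotProduct_mulVec_eq_zero_of_trace_mul_pow {K : Type*} [Field K] [StarRing K] {n : ℕ}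
    (b : Fin n → Fin n → K) (hb : ∀ i j, star (b i) ⬝ᵥ b j = if i = j then 1 else 0)
    {S D : Matrix (Fin n) (Fin n) K} {μ : Fin n → K} (hμ : ∀ i, S *ᵥ b i = μ i • b i)
    (hμinj : Function.Injective μ) (hD : ∀ m < n, (D * S ^ m).trace = 0) (i : Fin n) :
    star (b i) ⬝ᵥ (D *ᵥ b i) = 0 := by
  have hvec : (fun i => star (b i) ⬝ᵥ (D *ᵥ b i)) ᵥ* vandermonde μ = 0 := by
    ext m
    rw [Pi.zero_apply, ← hD m m.isLt, trace_mul_pow_eq_sum b hb hμ]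
    simp only [vecMul, dotProduct, vandermonde_apply, Pi.star_apply, mul_comm]
  exact congrFun (eq_zero_of_vecMul_eq_zero (det_vandermonde_ne_zero_iff.mpr hμinj) hvec) i

theorem trace_vecMulVec_star_mul {R ι : Type*} [CommSemiring R] [StarRing R] [Fintype ι]
    (b : ι → R) (X : Matrix ι ι R) :
    (vecMulVec b (star b) * X).trace = star b ⬝ᵥ (X *ᵥ b) := by
  rw [vecMulVec_mul, trace_vecMulVec, dotProduct_comm, ← dotProduct_mulVec]

theorem ofReal_sqrt_two_sq : (√2 : ℂ) ^ 2 = 2 := by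
  norm_cast
  simp

theorem spinOp_eq (v : Fin 3 → ℝ) :
    spinOp v = !![(v 2 : ℂ), (v 0 - v 1 * I) / √2, 0;
      (v 0 + v 1 * I) / √2, 0, (v 0 - v 1 * I) / √2;
      0, (v 0 + v 1 * I) / √2, -(v 2 : ℂ)] := by
  ext i j
  fin_cases i <;> fin_cases j <;> simp [spinOp, Lx, Ly, Lz] <;> ring

theorem trace_spinOp (v : Fin 3 → ℝ) : (spinOp v).trace = 0 := by
  simp [spinOp_eq, trace_fin_three]

theorem trace_spinOp_pow_three (v : Fin 3 → ℝ) : (spinOp v ^ 3).trace = 0 := by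
  simp only [spinOp_eq, pow_succ, pow_zero, one_mul, mul_fin_three, trace_fin_three, of_apply,
    cons_val', cons_val_zero, cons_val_one, cons_val, cons_val_fin_one]
  ring

theorem trace_spinOp_sq {v : Fin 3 → ℝ} (hv : v 0 ^ 2 + v 1 ^ 2 + v 2 ^ 2 = 1) :
    (spinOp v ^ 2).trace = 2 := by
  have hv' : (v 0 : ℂ) ^ 2 + (v 1 : ℂ) ^ 2 + (v 2 : ℂ) ^ 2 = 1 := by exact_mod_cast hv
  simp only [spinOp_eq, pow_two, mul_fin_three, trace_fin_three, of_apply, cons_val', cons_val_zero,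
    cons_val_one, cons_val, cons_val_fin_one]
  field_simp
  linear_combination
    4 * hv' - 4 * (v 1 : ℂ) ^ 2 * I_sq + (2 * (v 2 : ℂ) ^ 2 - 2) * ofReal_sqrt_two_sq

noncomputable def probeState (u ε : ℂ) : Fin 3 → ℂ := ![u / 2, ε / √2, -(starRingEnd ℂ u) / 2]

theorem star_probeState_dotProduct {u ε : ℂ} (hu : ‖u‖ = 1) (hε : ‖ε‖ = 1) :
    star (probeState u ε) ⬝ᵥ probeState u ε = 1 := by
  have hu' : starRingEnd ℂ u * u = 1 := by simp [conj_mul', hu]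
  have hε' : starRingEnd ℂ ε * ε = 1 := by simp [conj_mul', hε]
  simp only [probeState, dotProduct, Fin.sum_univ_three, Pi.star_apply, RCLike.star_def,
    cons_val_zero, cons_val_one, cons_val, map_div₀, map_neg, map_ofNat, conj_ofReal, conj_conj]
  field_simp
  linear_combination 2 * (√2 : ℂ) ^ 2 * hu' + 4 * hε' - 2 * ofReal_sqrt_two_sq

theorem vecMulVec_probeState_ne {u : ℂ} (hu : u ≠ 0) :
    vecMulVec (probeState u 1) (star (probeState u 1)) ≠
      vecMulVec (probeState u (-1)) (star (probeState u (-1))) := by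
  intro h
  have h01 := congrFun (congrFun h 0) 1
  simp [probeState, vecMulVec_apply, neg_div, CharZero.eq_neg_self_iff, hu] at h01

noncomputable def probeDiff (u : ℂ) : Matrix (Fin 3) (Fin 3) ℂ :=
  vecMulVec (probeState u 1) (star (probeState u 1)) -
    vecMulVec (probeState u (-1)) (star (probeState u (-1)))

theorem trace_probeDiff (u : ℂ) : (probeDiff u).trace = 0 := by
  rw [probeDiff, trace_sub, trace_vecMulVec, trace_vecMulVec]
  simp only [probeState, dotProduct, Fin.sum_univ_three, Pi.star_apply, RCLike.star_def,
    cons_val_zero, cons_val_one, cons_val, map_div₀, map_neg, map_one, conj_ofReal, conj_conj]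
  ring

theorem trace_probeDiff_mul_spinOp (u : ℂ) (v : Fin 3 → ℝ) :
    (probeDiff u * spinOp v).trace = 0 := by
  rw [probeDiff, sub_mul, trace_sub, trace_vecMulVec_star_mul, trace_vecMulVec_star_mul]
  simp only [probeState, spinOp_eq, mulVec, dotProduct, Fin.sum_univ_three, Pi.star_apply,
    RCLike.star_def, of_apply, cons_val', cons_val_zero, cons_val_one, cons_val, cons_val_fin_one,
    map_div₀, map_neg, map_one, map_ofNat, conj_ofReal, conj_conj]
  ring

theorem trace_probeDiff_mul_spinOp_sq {u : ℂ} {v : Fin 3 → ℝ}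
    (hphase : v 2 * (u * (v 0 + v 1 * I)).re = 0) :
    (probeDiff u * spinOp v ^ 2).trace = 0 := by
  have hphase' : (v 2 : ℂ) * (u * (v 0 + v 1 * I) + starRingEnd ℂ u * (v 0 - v 1 * I)) = 0 := by
    have := congrArg (fun r : ℝ => (2 * r : ℂ)) hphase
    simp only [ofReal_mul, ofReal_zero, re_eq_add_conj, map_mul, map_add, conj_ofReal,
      conj_I] at this
    linear_combination this
  rw [probeDiff, sub_mul, trace_sub, trace_vecMulVec_star_mul, trace_vecMulVec_star_mul, pow_two,
    ← mulVec_mulVec, ← mulVec_mulVec]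
  simp only [probeState, spinOp_eq, mulVec, dotProduct, Fin.sum_univ_three, Pi.star_apply,
    RCLike.star_def, of_apply, cons_val', cons_val_zero, cons_val_one, cons_val, cons_val_fin_one,
    map_div₀, map_neg, map_one, map_ofNat, conj_ofReal, conj_conj]
  linear_combination 2 * (√2 : ℂ)⁻¹ ^ 2 * hphase'

theorem ne_of_power_sums {K : Type*} [Field K] [CharZero K] {a b c : K} (h1 : a + b + c = 0)
    (h2 : a ^ 2 + b ^ 2 + c ^ 2 = 2) (h3 : a ^ 3 + b ^ 3 + c ^ 3 = 0) : a ≠ b := by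
  rintro rfl
  obtain rfl : c = -2 * a := by linear_combination h1
  obtain rfl : a = 0 := pow_eq_zero_iff (n := 3) (by norm_num) |>.mp (by linear_combination -h3 / 6)
  norm_num at h2

theorem injective_of_power_sums {K : Type*} [Field K] [CharZero K] {μ : Fin 3 → K}
    (h1 : ∑ i, μ i = 0) (h2 : ∑ i, μ i ^ 2 = 2) (h3 : ∑ i, μ i ^ 3 = 0) : Function.Injective μ := by
  simp only [Fin.sum_univ_three] at h1 h2 h3
  have h01 := ne_of_power_sums h1 h2 h3
  have h02 := ne_of_power_sums (a := μ 0) (b := μ 2) (c := μ 1) (by linear_combination h1)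
    (by linear_combination h2) (by linear_combination h3)
  have h12 := ne_of_power_sums (a := μ 1) (b := μ 2) (c := μ 0) (by linear_combination h1)
    (by linear_combination h2) (by linear_combination h3)
  intro i j hij
  fin_cases i <;> fin_cases j <;> simp_all [eq_comm]

theorem spinOp_eigenvalues_injective {v : Fin 3 → ℝ} (hv : v 0 ^ 2 + v 1 ^ 2 + v 2 ^ 2 = 1)
    (b : Fin 3 → Fin 3 → ℂ) (hb : ∀ i j, star (b i) ⬝ᵥ b j = if i = j then 1 else 0)
    {μ : Fin 3 → ℂ} (hμ : ∀ i, spinOp v *ᵥ b i = μ i • b i) : Function.Injective μ := by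
  refine injective_of_power_sums ?_ ?_ ?_
  · simpa [trace_spinOp] using sum_pow_eq_trace_pow b hb hμ 1
  · rw [sum_pow_eq_trace_pow b hb hμ, trace_spinOp_sq hv]
  · rw [sum_pow_eq_trace_pow b hb hμ, trace_spinOp_pow_three]

theorem trace_vecMulVec_mul_probeState_eq {v : Fin 3 → ℝ} (hv : v 0 ^ 2 + v 1 ^ 2 + v 2 ^ 2 = 1)
    {u : ℂ} (hphase : v 2 * (u * (v 0 + v 1 * I)).re = 0)
    (b : Fin 3 → Fin 3 → ℂ) (hb : ∀ i j, star (b i) ⬝ᵥ b j = if i = j then 1 else 0)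
    {μ : Fin 3 → ℂ} (hμ : ∀ i, spinOp v *ᵥ b i = μ i • b i) (j : Fin 3) :
    (vecMulVec (b j) (star (b j)) * vecMulVec (probeState u 1) (star (probeState u 1))).trace =
      (vecMulVec (b j) (star (b j)) *
        vecMulVec (probeState u (-1)) (star (probeState u (-1)))).trace := by
  rw [← sub_eq_zero, ← trace_sub, ← mul_sub, trace_vecMulVec_star_mul]
  refine star_dotProduct_mulVec_eq_zero_of_trace_mul_pow (D := probeDiff u) b hb hμ
    (spinOp_eigenvalues_injective hv b hb hμ) (fun m hm => ?_) j
  interval_cases m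
  · simpa using trace_probeDiff u
  · simpa using trace_probeDiff_mul_spinOp u v
  · exact trace_probeDiff_mul_spinOp_sq hphase

theorem exists_norm_eq_one_re_mul_eq_zero (w : ℂ) : ∃ u : ℂ, ‖u‖ = 1 ∧ (u * w).re = 0 := by
  rcases eq_or_ne w 0 with rfl | hw
  · exact ⟨1, by simp, by simp⟩
  · refine ⟨I * starRingEnd ℂ w / ‖w‖, ?_, ?_⟩
    · simp [hw]
    · rw [div_mul_eq_mul_div, mul_assoc, conj_mul']
      simp [← ofReal_pow]

theorem Mrow_axes_sum_eq_zero : Mrow ![1, 0, 0] + Mrow ![0, 1, 0] + Mrow ![0, 0, 1] = 0 := by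
  ext j
  fin_cases j <;> norm_num [Mrow, cons_val_two]

theorem rank_Mrow_axes_le_three (n₄ : Fin 3 → ℝ) :
    Matrix.rank (fun k => Mrow (![![1, 0, 0], ![0, 1, 0], ![0, 0, 1], n₄] k) :
      Matrix (Fin 4) (Fin 5) ℝ) ≤ 3 := by
  refine Nat.le_of_lt_succ (Matrix.rank_lt_card_of_not_linearIndependent_row ?_)
  rw [Fintype.not_linearIndependent_iff]
  refine ⟨![1, 1, 1, 0], ?_, 0, by simp⟩
  simpa [Fin.sum_univ_four, Matrix.row] using Mrow_axes_sum_eq_zero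

/-- For directions `e₁, e₂, e₃` and any fourth direction, the associated `4×5` matrix has rank
at most 3, and consequently the four spin-1 eigenbases cannot distinguish all pure states. -/
theorem three_axes_plus_one_insufficient (n₄ : Fin 3 → ℝ)
    (hn₄ : n₄ 0 ^ 2 + n₄ 1 ^ 2 + n₄ 2 ^ 2 = 1) :
    letI nvec : Fin 4 → Fin 3 → ℝ := ![![1, 0, 0], ![0, 1, 0], ![0, 0, 1], n₄]
    letI M : Matrix (Fin 4) (Fin 5) ℝ := fun k => Mrow (nvec k)
    M.rank ≤ 3 ∧
    ∀ B : Fin 4 → Fin 3 → Fin 3 → ℂ,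
      (∀ k i j, star (B k i) ⬝ᵥ B k j = if i = j then (1 : ℂ) else 0) →
      (∀ k j, ∃ μ : ℂ, spinOp (nvec k) *ᵥ B k j = μ • B k j) →
      ∃ ψ η : Fin 3 → ℂ, star ψ ⬝ᵥ ψ = 1 ∧ star η ⬝ᵥ η = 1 ∧
        Matrix.vecMulVec ψ (star ψ) ≠ Matrix.vecMulVec η (star η) ∧
        ∀ k j, (Matrix.vecMulVec (B k j) (star (B k j)) *
            Matrix.vecMulVec ψ (star ψ)).trace =
          (Matrix.vecMulVec (B k j) (star (B k j)) * Matrix.vecMulVec η (star η)).trace := by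
  refine ⟨rank_Mrow_axes_le_three n₄, fun B hB heig => ?_⟩
  obtain ⟨u, hu, hphase⟩ := exists_norm_eq_one_re_mul_eq_zero (n₄ 0 + n₄ 1 * I)
  refine ⟨probeState u 1, probeState u (-1), star_probeState_dotProduct hu (by simp),
    star_probeState_dotProduct hu (by simp),
    vecMulVec_probeState_ne (norm_ne_zero_iff.mp (by simp [hu])), fun k j => ?_⟩
  choose μ hμ using heig
  refine trace_vecMulVec_mul_probeState_eq ?_ ?_ (B k) (hB k) (hμ k) j
  · fin_cases k <;> simp [hn₄]
  · fin_cases k <;> simp [hphase]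
end
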